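/- (Lemma 3.1, second part; quantitative form of Proposition 2.1(v).) Let u ∈ 𝒞(Ω) with A(u) > 0, B(u) > 0 and I_μ(u) < 0. Then A(u) ≥ (2·2*_μ/(2*_μ − 1)) · m_μ; equivalently, A(u) ≥ S_{H,L}^{(2N−μ)/(N−μ+2)}. In particular every element of the unstable set V_μ := {u ∈ 𝒞(Ω) : J_μ(u) < m_μ and I_μ(u) < 0} satisfies this lower bound on its Dirichlet energy. -/

import Mathlib

open MeasureTheory

noncomputable section

/-- The set of continuously differentiable functions with compact support contained in `Ω`. -/
def testFuns (N : ℕ) (Ω : Set (EuclideanSpace ℝ (Fin N))) :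
    Set (EuclideanSpace ℝ (Fin N) → ℝ) :=
  {u | ContDiff ℝ 1 u ∧ HasCompactSupport u ∧ tsupport u ⊆ Ω}

/-- Dirichlet energy `A(u) = ∫ ‖∇u‖²`. -/
def Afun (N : ℕ) (u : EuclideanSpace ℝ (Fin N) → ℝ) : ℝ :=
  ∫ x, ‖fderiv ℝ u x‖ ^ 2

/-- Nonlocal Hartree-type energy `B(u)`. -/
def Bfun (N : ℕ) (μ : ℝ) (u : EuclideanSpace ℝ (Fin N) → ℝ) : ℝ :=
  ∫ x, ∫ y, |u x| ^ ((2 * (N : ℝ) - μ) / ((N : ℝ) - 2)) *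
    |u y| ^ ((2 * (N : ℝ) - μ) / ((N : ℝ) - 2)) * ‖x - y‖ ^ (-μ)

/-- The energy functional `J_μ`. -/
def Jfun (N : ℕ) (μ : ℝ) (u : EuclideanSpace ℝ (Fin N) → ℝ) : ℝ :=
  (1 / 2) * Afun N u - (1 / (2 * ((2 * (N : ℝ) - μ) / ((N : ℝ) - 2)))) * Bfun N μ u

/-- The Nehari functional `I_μ`. -/
def Ifun (N : ℕ) (μ : ℝ) (u : EuclideanSpace ℝ (Fin N) → ℝ) : ℝ :=
  Afun N u - Bfun N μ u

/-- The best constant `S_{H,L}`. -/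
def SHL (N : ℕ) (μ : ℝ) (Ω : Set (EuclideanSpace ℝ (Fin N))) : ℝ :=
  sInf {c : ℝ | ∃ u ∈ testFuns N Ω, 0 < Bfun N μ u ∧
    c = Afun N u / (Bfun N μ u) ^ (((N : ℝ) - 2) / (2 * (N : ℝ) - μ))}

/-- The critical level `m_μ`. -/
def mlevel (N : ℕ) (μ : ℝ) (Ω : Set (EuclideanSpace ℝ (Fin N))) : ℝ :=
  (((N : ℝ) - μ + 2) / (2 * (2 * (N : ℝ) - μ))) *
    SHL N μ Ω ^ ((2 * (N : ℝ) - μ) / ((N : ℝ) - μ + 2))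

end

/-!
If `I_μ(u) < 0` then `A(u) < B(u)`, so the Rayleigh quotient of `u` gives
`S_{H,L} ≤ A / B^θ ≤ A / A^θ = A^{1-θ}` with `θ = (N-2)/(2N-μ) ∈ [0, 1)`.
Raising to the power `1/(1-θ) = (2N-μ)/(N-μ+2)` gives the second bound, and the first one is
the same inequality, because the constant in front of `m_μ` is the reciprocal of the one in `m_μ`.
-/

open Real

theorem rpow_inv_one_sub_le_of_le_div_rpow {s a b θ : ℝ} (hs : 0 ≤ s) (ha : 0 < a)
    (hab : a ≤ b) (hθ0 : 0 ≤ θ) (hθ1 : θ < 1) (h : s ≤ a / b ^ θ) : s ^ (1 - θ)⁻¹ ≤ a := by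
  have hθ1' : 0 < 1 - θ := sub_pos.mpr hθ1
  have hs_le : s ≤ a ^ (1 - θ) :=
    calc s ≤ a / b ^ θ := h
      _ ≤ a / a ^ θ := by gcongr
      _ = a ^ (1 - θ) := by rw [rpow_sub ha, rpow_one]
  calc s ^ (1 - θ)⁻¹ ≤ (a ^ (1 - θ)) ^ (1 - θ)⁻¹ := by gcongr
    _ = a := by rw [← rpow_mul ha.le, mul_inv_cancel₀ hθ1'.ne', rpow_one]

theorem inv_one_sub_div_eq {n μ : ℝ} (hd : 2 * n - μ ≠ 0) :
    (1 - (n - 2) / (2 * n - μ))⁻¹ = (2 * n - μ) / (n - μ + 2) := by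
  rw [one_sub_div hd, inv_div]
  ring_nf

theorem two_mul_div_sub_one_mul_div_eq_one {n μ : ℝ} (h2 : n - 2 ≠ 0) (hd : 2 * n - μ ≠ 0)
    (he : n - μ + 2 ≠ 0) :
    2 * ((2 * n - μ) / (n - 2)) / ((2 * n - μ) / (n - 2) - 1) *
      ((n - μ + 2) / (2 * (2 * n - μ))) = 1 := by
  have hp : (2 * n - μ) / (n - 2) - 1 = (n - μ + 2) / (n - 2) := by
    field_simp
    ring
  rw [hp]
  field_simp

theorem Afun_nonneg (N : ℕ) (u : EuclideanSpace ℝ (Fin N) → ℝ) : 0 ≤ Afun N u :=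
  integral_nonneg fun _ => sq_nonneg _

theorem Afun_div_rpow_nonneg (N : ℕ) (u : EuclideanSpace ℝ (Fin N) → ℝ) {b : ℝ} (hb : 0 ≤ b)
    (t : ℝ) : 0 ≤ Afun N u / b ^ t :=
  div_nonneg (Afun_nonneg N u) (rpow_nonneg hb t)

theorem SHL_nonneg (N : ℕ) (μ : ℝ) (Ω : Set (EuclideanSpace ℝ (Fin N))) : 0 ≤ SHL N μ Ω :=
  Real.sInf_nonneg <| by
    rintro _ ⟨v, -, hBv, rfl⟩
    exact Afun_div_rpow_nonneg N v hBv.le _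

theorem SHL_le_Afun_div_rpow {N : ℕ} {μ : ℝ} {Ω : Set (EuclideanSpace ℝ (Fin N))}
    {u : EuclideanSpace ℝ (Fin N) → ℝ} (hu : u ∈ testFuns N Ω) (hB : 0 < Bfun N μ u) :
    SHL N μ Ω ≤ Afun N u / Bfun N μ u ^ (((N : ℝ) - 2) / (2 * (N : ℝ) - μ)) :=
  csInf_le ⟨0, by rintro _ ⟨v, -, hBv, rfl⟩; exact Afun_div_rpow_nonneg N v hBv.le _⟩
    ⟨u, hu, hB, rfl⟩

theorem SHL_rpow_le_Afun {N : ℕ} {μ : ℝ} {Ω : Set (EuclideanSpace ℝ (Fin N))}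
    {u : EuclideanSpace ℝ (Fin N) → ℝ} (hN : 2 ≤ N) (hμN : μ < N) (hu : u ∈ testFuns N Ω)
    (hA : 0 < Afun N u) (hB : 0 < Bfun N μ u) (hAB : Afun N u ≤ Bfun N μ u) :
    SHL N μ Ω ^ ((2 * (N : ℝ) - μ) / ((N : ℝ) - μ + 2)) ≤ Afun N u := by
  have hN' : (2 : ℝ) ≤ N := by exact_mod_cast hN
  have hd : 0 < 2 * (N : ℝ) - μ := by linarith
  rw [← inv_one_sub_div_eq hd.ne']
  refine rpow_inv_one_sub_le_of_le_div_rpow (SHL_nonneg N μ Ω) hA hAB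
    (div_nonneg (by linarith) hd.le) ?_ (SHL_le_Afun_div_rpow hu hB)
  rw [div_lt_one hd]
  linarith

theorem unstable_set_dirichlet_lower_bound_general
    (N : ℕ) (hN : 3 ≤ N) (μ : ℝ) (hμN : μ < (N : ℝ))
    (Ω : Set (EuclideanSpace ℝ (Fin N)))
    (u : EuclideanSpace ℝ (Fin N) → ℝ) (hu : u ∈ testFuns N Ω)
    (hA : 0 < Afun N u) (hB : 0 < Bfun N μ u) (hI : Ifun N μ u < 0) :
    Afun N u ≥ (2 * ((2 * (N : ℝ) - μ) / ((N : ℝ) - 2)) /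
        ((2 * (N : ℝ) - μ) / ((N : ℝ) - 2) - 1)) * mlevel N μ Ω ∧
    Afun N u ≥ SHL N μ Ω ^ ((2 * (N : ℝ) - μ) / ((N : ℝ) - μ + 2)) := by
  have hN' : (3 : ℝ) ≤ N := by exact_mod_cast hN
  have hSA := SHL_rpow_le_Afun (by omega) hμN hu hA hB (sub_neg.mp hI).le
  refine ⟨?_, hSA⟩
  rw [ge_iff_le, mlevel, ← mul_assoc, two_mul_div_sub_one_mul_div_eq_one (by linarith)
    (by linarith) (by linarith), one_mul]
  exact hSA

/-- Lemma 3.1, second part: lower bound on the Dirichlet energy in the unstable set. -/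
theorem unstable_set_dirichlet_lower_bound
    (N : ℕ) (hN : 3 ≤ N) (μ : ℝ) (hμ0 : 0 < μ) (hμN : μ < (N : ℝ))
    (Ω : Set (EuclideanSpace ℝ (Fin N))) (hΩo : IsOpen Ω) (hΩne : Ω.Nonempty)
    (u : EuclideanSpace ℝ (Fin N) → ℝ) (hu : u ∈ testFuns N Ω)
    (hA : 0 < Afun N u) (hB : 0 < Bfun N μ u) (hI : Ifun N μ u < 0) :
    Afun N u ≥ (2 * ((2 * (N : ℝ) - μ) / ((N : ℝ) - 2)) /
        ((2 * (N : ℝ) - μ) / ((N : ℝ) - 2) - 1)) * mlevel N μ Ω ∧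
    Afun N u ≥ SHL N μ Ω ^ ((2 * (N : ℝ) - μ) / ((N : ℝ) - μ + 2)) :=
  unstable_set_dirichlet_lower_bound_general N hN μ hμN Ω u hu hA hB hI
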